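/- arXiv:1609.09000 — 2 statements merged into one kernel-verified Lean document; each statement's English description precedes it below -/
import Mathlib

section
/- Bound on frequent paths of length one: let 𝒢 be a finite nonempty family of labeled graphs, each with at most V_max vertices, and let 0 < ls ≤ 1 be a minimum support threshold. Then the number of pairwise non-isomorphic labeled single-edge graphs (paths of length one, i.e., two labeled vertices joined by a labeled edge) that are frequent over 𝒢 with threshold ls is at most V_max² / ls. -/
open scoped Classical

/-- An undirected labeled graph: a finite vertex set (of naturals), a finite set of
undirected edges (unordered pairs of distinct vertices contained in the vertex set),
and labeling functions for vertices and edges into a label type `L`. -/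
structure LGraph (L : Type) where
  verts : Finset ℕ
  edges : Finset (Sym2 ℕ)
  edge_mem : ∀ e ∈ edges, ∀ v ∈ e, v ∈ verts
  edge_not_diag : ∀ e ∈ edges, ¬ e.IsDiag
  vlabel : ℕ → L
  elabel : Sym2 ℕ → L

/-- `ψ` is a label-preserving subgraph isomorphism from `G` to `H`. -/
def IsSubIso {L : Type} (G H : LGraph L) (ψ : ℕ → ℕ) : Prop :=
  Set.InjOn ψ (G.verts : Set ℕ) ∧
  (∀ v ∈ G.verts, ψ v ∈ H.verts ∧ H.vlabel (ψ v) = G.vlabel v) ∧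
  (∀ e ∈ G.edges, Sym2.map ψ e ∈ H.edges ∧ H.elabel (Sym2.map ψ e) = G.elabel e)

/-- `G ⊆ H`: there exists a label-preserving subgraph isomorphism from `G` to `H`;
we also say `G` is supported by `H`. -/
def IsSub {L : Type} (G H : LGraph L) : Prop := ∃ ψ : ℕ → ℕ, IsSubIso G H ψ

/-- Two labeled graphs are isomorphic iff each is subgraph-isomorphic to the other. -/
def Isomorphic {L : Type} (G H : LGraph L) : Prop := IsSub G H ∧ IsSub H G

/-- The size `|G| = |V(G)| + |E(G)|` of a labeled graph. -/
def gsize {L : Type} (G : LGraph L) : ℕ := G.verts.card + G.edges.card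

/-- The support of `G` over a finite (indexed) family of graphs: the fraction of
graphs in the family that support `G`. -/
noncomputable def support {L ι : Type} (G : LGraph L) (D : Finset ι) (f : ι → LGraph L) : ℝ :=
  ((D.filter fun i => IsSub G (f i)).card : ℝ) / (D.card : ℝ)

/-- The coverage of a graph `G` by a graph `R`: `cov(R,G) = |R|/|G|`. -/
noncomputable def cov {L : Type} (R G : LGraph L) : ℝ := (gsize R : ℝ) / (gsize G : ℝ)

/-- A path of length one: a labeled graph with exactly two vertices joined by one edge. -/
def IsPathOne {L : Type} (G : LGraph L) : Prop := G.verts.card = 2 ∧ G.edges.card = 1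

/-! A single-edge graph embedded in `H` lands on an edge of `H`, and two single-edge graphs
landing on the same edge of `H` carry the same three labels, hence are isomorphic. So each graph
of the family supports at most `|E(H)| ≤ |V(H)|² ≤ V_max²` of the pairwise non-isomorphic
frequent paths, while each frequent path is supported by at least `ls · |𝒢|` graphs; double
counting the supporting pairs gives `|P| · ls · |𝒢| ≤ |𝒢| · V_max²`. -/

section

variable {L : Type}

lemma LGraph.card_edges_le_sq (H : LGraph L) : H.edges.card ≤ H.verts.card ^ 2 :=
  calc H.edges.card ≤ H.verts.sym2.card :=
        Finset.card_le_card fun e he => Finset.mem_sym2_iff.mpr (H.edge_mem e he)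
    _ = (H.verts.card + 1).choose 2 := Finset.card_sym2 _
    _ ≤ H.verts.card ^ 2 := by
        rw [Nat.choose_two_right]
        exact Nat.div_le_of_le_mul (by rw [Nat.add_sub_cancel]; nlinarith)

lemma IsPathOne.exists_eq {G : LGraph L} (h : IsPathOne G) :
    ∃ u v : ℕ, u ≠ v ∧ G.verts = {u, v} ∧ G.edges = {s(u, v)} := by
  obtain ⟨e, he⟩ := Finset.card_eq_one.mp h.2
  have heG : e ∈ G.edges := by simp [he]
  induction e using Sym2.ind with
  | _ u v =>
    have huv : u ≠ v := fun huv => G.edge_not_diag _ heG (by simp [huv])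
    have hsub : ({u, v} : Finset ℕ) ⊆ G.verts :=
      Finset.insert_subset (G.edge_mem _ heG u (by simp))
        (Finset.singleton_subset_iff.mpr (G.edge_mem _ heG v (by simp)))
    refine ⟨u, v, huv, (Finset.eq_of_subset_of_card_le hsub ?_).symm, he⟩
    rw [Finset.card_pair huv, h.1]

lemma isSub_of_mem_edges {G H : LGraph L} {u v x y : ℕ}
    (hGv : G.verts = {u, v}) (hGe : G.edges = {s(u, v)}) (hxy : s(x, y) ∈ H.edges)
    (hx : H.vlabel x = G.vlabel u) (hy : H.vlabel y = G.vlabel v)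
    (hl : H.elabel s(x, y) = G.elabel s(u, v)) : IsSub G H := by
  have huv : u ≠ v := fun huv => G.edge_not_diag s(u, v) (by simp [hGe]) (by simp [huv])
  have hxy' : x ≠ y := fun hxy' => H.edge_not_diag _ hxy (by simp [hxy'])
  have hψ : Sym2.map (fun w => if w = u then x else y) s(u, v) = s(x, y) := by
    simp [huv.symm]
  refine ⟨fun w => if w = u then x else y, ?_, ?_, ?_⟩
  · rw [hGv, Finset.coe_pair, Set.injOn_pair]
    simp [huv.symm, hxy']
  · intro w hw
    rw [hGv] at hw
    rcases Finset.mem_insert.mp hw with rfl | hw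
    · simp [H.edge_mem _ hxy x (by simp), hx]
    · rw [Finset.mem_singleton.mp hw]
      simp [H.edge_mem _ hxy y (by simp), huv.symm, hy]
  · intro e he
    rw [hGe, Finset.mem_singleton] at he
    rw [he, hψ]
    exact ⟨hxy, hl⟩

lemma isomorphic_of_map_eq {G G' H : LGraph L} {ψ ψ' : ℕ → ℕ} {e e' : Sym2 ℕ}
    (hG : IsPathOne G) (hG' : IsPathOne G') (hψ : IsSubIso G H ψ) (hψ' : IsSubIso G' H ψ')
    (he : e ∈ G.edges) (he' : e' ∈ G'.edges) (heq : e.map ψ = e'.map ψ') :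
    Isomorphic G G' := by
  obtain ⟨u, v, -, hGv, hGe⟩ := hG.exists_eq
  obtain ⟨u', v', -, hG'v, hG'e⟩ := hG'.exists_eq
  rw [hGe, Finset.mem_singleton] at he
  rw [hG'e, Finset.mem_singleton] at he'
  subst he he'
  have hu := (hψ.2.1 u (by simp [hGv])).2
  have hv := (hψ.2.1 v (by simp [hGv])).2
  have hl := (hψ.2.2 s(u, v) (by simp [hGe])).2
  suffices key : ∀ x y, G'.verts = {x, y} → G'.edges = {s(x, y)} →
      ψ u = ψ' x → ψ v = ψ' y → Isomorphic G G' by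
    rw [Sym2.map_mk, Sym2.map_mk, Sym2.eq_iff] at heq
    rcases heq with ⟨h₁, h₂⟩ | ⟨h₁, h₂⟩
    · exact key u' v' hG'v hG'e h₁ h₂
    · exact key v' u' (by rw [hG'v, Finset.pair_comm]) (by rw [hG'e, Sym2.eq_swap]) h₁ h₂
  intro x y hG'v hG'e hx hy
  have hx' := (hψ'.2.1 x (by simp [hG'v])).2
  have hy' := (hψ'.2.1 y (by simp [hG'v])).2
  have hl' := (hψ'.2.2 s(x, y) (by simp [hG'e])).2
  rw [Sym2.map_mk] at hl hl'
  have hvx : G'.vlabel x = G.vlabel u := by rw [← hx', ← hx, hu]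
  have hvy : G'.vlabel y = G.vlabel v := by rw [← hy', ← hy, hv]
  have hel : G'.elabel s(x, y) = G.elabel s(u, v) := by rw [← hl', ← hx, ← hy, hl]
  exact ⟨isSub_of_mem_edges hGv hGe (by simp [hG'e]) hvx hvy hel,
    isSub_of_mem_edges hG'v hG'e (by simp [hGe]) hvx.symm hvy.symm hel.symm⟩

lemma card_filter_isSub_le_card_edges {κ : Type} (H : LGraph L) (P : Finset κ) (p : κ → LGraph L)
    (hpath : ∀ j ∈ P, IsPathOne (p j))
    (hdist : ∀ j ∈ P, ∀ j' ∈ P, j ≠ j' → ¬ Isomorphic (p j) (p j')) :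
    (P.filter fun j => IsSub (p j) H).card ≤ H.edges.card := by
  let hits (j : κ) (ε : Sym2 ℕ) : Prop :=
    ∃ ψ, IsSubIso (p j) H ψ ∧ ∃ e ∈ (p j).edges, e.map ψ = ε
  refine Finset.card_le_card_of_forall_subsingleton hits ?_ ?_
  · intro j hj
    obtain ⟨hjP, ψ, hψ⟩ := Finset.mem_filter.mp hj
    obtain ⟨e, he⟩ := Finset.card_pos.mp (by rw [(hpath j hjP).2]; exact Nat.one_pos)
    exact ⟨e.map ψ, (hψ.2.2 e he).1, ψ, hψ, e, he, rfl⟩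
  · rintro ε - j ⟨hj, ψ, hψ, e, he, rfl⟩ j' ⟨hj', ψ', hψ', e', he', heq⟩
    have hjP := (Finset.mem_filter.mp hj).1
    have hj'P := (Finset.mem_filter.mp hj').1
    by_contra hne
    exact hdist j hjP j' hj'P hne
      (isomorphic_of_map_eq (hpath j hjP) (hpath j' hj'P) hψ hψ' he he' heq.symm)

end

theorem frequent_paths_bound_general {L ι κ : Type} (𝒢 : Finset ι) (f : ι → LGraph L)
    (hne : 𝒢.Nonempty) (Vmax : ℕ) (hV : ∀ i ∈ 𝒢, (f i).verts.card ≤ Vmax)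
    (ls : ℝ) (h0 : 0 < ls)
    (P : Finset κ) (p : κ → LGraph L)
    (hpath : ∀ j ∈ P, IsPathOne (p j))
    (hdist : ∀ j ∈ P, ∀ j' ∈ P, j ≠ j' → ¬ Isomorphic (p j) (p j'))
    (hfreq : ∀ j ∈ P, ls ≤ support (p j) 𝒢 f) :
    (P.card : ℝ) ≤ (Vmax : ℝ) ^ 2 / ls := by
  have hcard : (0 : ℝ) < 𝒢.card := by exact_mod_cast hne.card_pos
  have hsupp (j) (hj : j ∈ P) :
      ls * 𝒢.card ≤ (𝒢.bipartiteAbove (fun j i => IsSub (p j) (f i)) j).card :=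
    (le_div_iff₀ hcard).mp (hfreq j hj)
  have hhits (i) (hi : i ∈ 𝒢) :
      ((P.bipartiteBelow (fun j i => IsSub (p j) (f i)) i).card : ℝ) ≤ (Vmax : ℝ) ^ 2 := by
    exact_mod_cast calc
      _ ≤ (f i).edges.card := card_filter_isSub_le_card_edges (f i) P p hpath hdist
      _ ≤ (f i).verts.card ^ 2 := (f i).card_edges_le_sq
      _ ≤ Vmax ^ 2 := Nat.pow_le_pow_left (hV i hi) 2
  have hcount := Finset.card_nsmul_le_card_nsmul _ hsupp hhits
  rw [nsmul_eq_mul, nsmul_eq_mul] at hcount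
  rw [le_div_iff₀ h0]
  nlinarith

/-- if every graph of the nonempty family 𝒢 has at most V_max vertices and
0 < ls ≤ 1, then the number of pairwise non-isomorphic labeled single-edge graphs that
are frequent over 𝒢 with threshold ls is at most V_max² / ls. -/
theorem frequent_paths_bound {L ι κ : Type} (𝒢 : Finset ι) (f : ι → LGraph L)
    (hne : 𝒢.Nonempty) (Vmax : ℕ) (hV : ∀ i ∈ 𝒢, (f i).verts.card ≤ Vmax)
    (ls : ℝ) (h0 : 0 < ls) (h1 : ls ≤ 1)
    (P : Finset κ) (p : κ → LGraph L)
    (hpath : ∀ j ∈ P, IsPathOne (p j))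
    (hdist : ∀ j ∈ P, ∀ j' ∈ P, j ≠ j' → ¬ Isomorphic (p j) (p j'))
    (hfreq : ∀ j ∈ P, ls ≤ support (p j) 𝒢 f) :
    (P.card : ℝ) ≤ (Vmax : ℝ) ^ 2 / ls :=
  frequent_paths_bound_general 𝒢 f hne Vmax hV ls h0 P p hpath hdist hfreq
end

section
/- Inhomogeneous clusters cannot attain optimal values for both homogeneity criteria: if a finite set C of labeled graphs contains two graphs that are not isomorphic, then for every labeled graph R, either sup(R, C) < 1 or there exists G ∈ C with cov(R, G) < 1. -/
open scoped Classical

/-!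
A support of 1 means that `R` embeds into every graph of the cluster, and coverages of at least 1
mean that no graph of the cluster is larger than `R`. An embedding into a graph of at most the
same size is onto on vertices and edges, so it can be inverted; hence every graph of the cluster
is isomorphic to `R`, and so any two of them are isomorphic.
-/

theorem Set.LeftInvOn.sym2_map {α β : Type*} {φ : β → α} {ψ : α → β} {s : Set α}
    (h : Set.LeftInvOn φ ψ s) :
    Set.LeftInvOn (Sym2.map φ) (Sym2.map ψ) {e | ∀ v ∈ e, v ∈ s} := by
  intro e he
  induction e using Sym2.ind with
  | _ a b => simp [h (he a (Sym2.mem_mk_left a b)), h (he b (Sym2.mem_mk_right a b))]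

namespace IsSubIso

variable {L : Type} {G H K : LGraph L} {ψ χ : ℕ → ℕ}

theorem injOn_edges (h : IsSubIso G H ψ) : Set.InjOn (Sym2.map ψ) G.edges :=
  (h.1.leftInvOn_invFunOn.sym2_map.mono fun e he => G.edge_mem e he).injOn

theorem comp (hχ : IsSubIso H K χ) (hψ : IsSubIso G H ψ) : IsSubIso G K (χ ∘ ψ) := by
  refine ⟨hχ.1.comp hψ.1 fun v hv => (hψ.2.1 v hv).1, fun v hv => ?_, fun e he => ?_⟩
  · obtain ⟨hψv, hψl⟩ := hψ.2.1 v hv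
    obtain ⟨hχv, hχl⟩ := hχ.2.1 _ hψv
    exact ⟨hχv, hχl.trans hψl⟩
  · obtain ⟨hψe, hψl⟩ := hψ.2.2 e he
    obtain ⟨hχe, hχl⟩ := hχ.2.2 _ hψe
    rw [← Sym2.map_map]
    exact ⟨hχe, hχl.trans hψl⟩

theorem image_eq_of_gsize_le (h : IsSubIso G H ψ) (hsize : gsize H ≤ gsize G) :
    G.verts.image ψ = H.verts ∧ G.edges.image (Sym2.map ψ) = H.edges := by
  have hV : G.verts.image ψ ⊆ H.verts := Finset.image_subset_iff.2 fun v hv => (h.2.1 v hv).1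
  have hE : G.edges.image (Sym2.map ψ) ⊆ H.edges :=
    Finset.image_subset_iff.2 fun e he => (h.2.2 e he).1
  have hcardV := Finset.card_image_of_injOn h.1
  have hcardE := Finset.card_image_of_injOn h.injOn_edges
  have := Finset.card_le_card hV
  have := Finset.card_le_card hE
  unfold gsize at hsize
  exact ⟨Finset.eq_of_subset_of_card_le hV (by omega),
    Finset.eq_of_subset_of_card_le hE (by omega)⟩

theorem invFunOn_of_image_eq (h : IsSubIso G H ψ) (hV : G.verts.image ψ = H.verts)
    (hE : G.edges.image (Sym2.map ψ) = H.edges) :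
    IsSubIso H G (Function.invFunOn ψ G.verts) := by
  have hbij : Set.BijOn ψ G.verts H.verts := by
    rw [← hV, Finset.coe_image]
    exact h.1.bijOn_image
  have hinv := hbij.invOn_invFunOn
  have hbij' := hbij.symm hinv.symm
  refine ⟨hbij'.injOn, fun w hw => ⟨hbij'.mapsTo hw, ?_⟩, fun e he => ?_⟩
  · rw [← (h.2.1 _ (hbij'.mapsTo hw)).2, hinv.2 hw]
  · obtain ⟨e', he', rfl⟩ := Finset.mem_image.1 (hE ▸ he)
    rw [hinv.1.sym2_map (G.edge_mem e' he')]
    exact ⟨he', (h.2.2 e' he').2.symm⟩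

end IsSubIso

section

variable {L : Type} {G H K : LGraph L}

theorem IsSub.trans (hGH : IsSub G H) (hHK : IsSub H K) : IsSub G K :=
  let ⟨ψ, hψ⟩ := hGH
  let ⟨χ, hχ⟩ := hHK
  ⟨χ ∘ ψ, hχ.comp hψ⟩

theorem IsSub.symm_of_gsize_le (h : IsSub G H) (hsize : gsize H ≤ gsize G) : IsSub H G :=
  let ⟨_, hψ⟩ := h
  let ⟨hV, hE⟩ := hψ.image_eq_of_gsize_le hsize
  ⟨_, hψ.invFunOn_of_image_eq hV hE⟩

theorem Isomorphic.symm (h : Isomorphic G H) : Isomorphic H G := ⟨h.2, h.1⟩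

theorem Isomorphic.trans (hGH : Isomorphic G H) (hHK : Isomorphic H K) : Isomorphic G K :=
  ⟨hGH.1.trans hHK.1, hHK.2.trans hGH.2⟩

theorem isomorphic_of_isSub_of_gsize_le (h : IsSub G H) (hsize : gsize H ≤ gsize G) :
    Isomorphic G H :=
  ⟨h, h.symm_of_gsize_le hsize⟩

theorem isSub_of_one_le_support {ι : Type} {D : Finset ι} {f : ι → LGraph L}
    (h : 1 ≤ support G D f) {i : ι} (hi : i ∈ D) : IsSub G (f i) := by
  by_contra hGi
  have hlt : (D.filter fun k => IsSub G (f k)).card < D.card :=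
    Finset.card_lt_card (Finset.filter_ssubset.2 ⟨i, hi, hGi⟩)
  have hD : (0 : ℝ) < D.card := Nat.cast_pos.2 (Finset.card_pos.2 ⟨i, hi⟩)
  exact h.not_gt ((div_lt_one hD).2 (by exact_mod_cast hlt))

theorem gsize_le_of_one_le_cov (h : 1 ≤ cov G H) : gsize H ≤ gsize G := by
  by_contra! hlt
  have hH : (0 : ℝ) < gsize H := Nat.cast_pos.2 (by omega)
  exact h.not_gt ((div_lt_one hH).2 (by exact_mod_cast hlt))

end

/-- inhomogeneous clusters cannot attain optimal values for both
homogeneity criteria: if C contains two non-isomorphic graphs, then for every graph R,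
either sup(R, C) < 1 or some G ∈ C has cov(R, G) < 1. -/
theorem inhomogeneous_cluster {L ι : Type} (C : Finset ι) (f : ι → LGraph L)
    (hinhom : ∃ i ∈ C, ∃ j ∈ C, ¬ Isomorphic (f i) (f j)) :
    ∀ R : LGraph L, support R C f < 1 ∨ ∃ i ∈ C, cov R (f i) < 1 := by
  intro R
  by_contra! h
  obtain ⟨hsup, hcov⟩ := h
  have hiso : ∀ k ∈ C, Isomorphic R (f k) := fun k hk =>
    isomorphic_of_isSub_of_gsize_le (isSub_of_one_le_support hsup hk)
      (gsize_le_of_one_le_cov (hcov k hk))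
  obtain ⟨i, hi, j, hj, hij⟩ := hinhom
  exact hij ((hiso i hi).symm.trans (hiso j hj))
end
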